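/- The function φ is strictly decreasing on the interval (0, 1/√3), and lim_{x → 0⁺} φ(x) = 1. -/

import Mathlib

/-! The derivative of `φ` on `(-1, 1)` is `(3x² - 1) exp(x/(1 - x²)) / ((1 + x)³(1 - x))`,
whose sign is that of `3x² - 1`; so `φ` decreases on `[-1/√3, 1/√3]`, and it is continuous
at `0` with `φ 0 = 1`. -/

open Filter Set

noncomputable def phi (x : ℝ) : ℝ :=
  (1 - x) / (1 + x) * Real.exp (x / (1 - x ^ 2))

lemma phi_hasDerivAt {x : ℝ} (hx₁ : -1 < x) (hx₂ : x < 1) :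
    HasDerivAt phi ((3 * x ^ 2 - 1) * Real.exp (x / (1 - x ^ 2)) /
      ((1 + x) ^ 3 * (1 - x))) x := by
  have h1p : 1 + x ≠ 0 := by linarith
  have h1m : 1 - x ≠ 0 := by linarith
  have hsq : 1 - x ^ 2 ≠ 0 := by nlinarith
  have hfrac : HasDerivAt (fun y : ℝ => (1 - y) / (1 + y))
      ((-1 * (1 + x) - (1 - x) * 1) / (1 + x) ^ 2) x :=
    ((hasDerivAt_id x).const_sub 1).div ((hasDerivAt_id x).const_add 1) h1p
  have hexpo : HasDerivAt (fun y : ℝ => y / (1 - y ^ 2))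
      ((1 * (1 - x ^ 2) - x * -(2 * x ^ 1)) / (1 - x ^ 2) ^ 2) x :=
    (hasDerivAt_id x).div ((hasDerivAt_pow 2 x).const_sub 1) hsq
  refine (hfrac.mul hexpo.exp).congr_deriv ?_
  field_simp
  ring

lemma phi_deriv_neg {x : ℝ} (hx : 3 * x ^ 2 < 1) : deriv phi x < 0 := by
  have hx₁ : -1 < x := by nlinarith
  have hx₂ : x < 1 := by nlinarith
  rw [(phi_hasDerivAt hx₁ hx₂).deriv]
  have hden : 0 < (1 + x) ^ 3 * (1 - x) := mul_pos (pow_pos (by linarith) 3) (by linarith)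
  exact div_neg_of_neg_of_pos (mul_neg_of_neg_of_pos (by linarith) (Real.exp_pos _)) hden

lemma three_mul_sq_lt_one_of_abs_lt {x : ℝ} (hx : |x| < 1 / Real.sqrt 3) : 3 * x ^ 2 < 1 := by
  have hsq : x ^ 2 < (1 / Real.sqrt 3) ^ 2 := sq_lt_sq' (abs_lt.mp hx).1 (abs_lt.mp hx).2
  rw [div_pow, Real.sq_sqrt (by norm_num)] at hsq
  linarith

lemma phi_strictAntiOn : StrictAntiOn phi (Icc (-(1 / Real.sqrt 3)) (1 / Real.sqrt 3)) := by
  have hlt : 1 / Real.sqrt 3 < 1 := by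
    rw [div_lt_one (by positivity), Real.lt_sqrt zero_le_one]
    norm_num
  refine strictAntiOn_of_deriv_neg (convex_Icc _ _) (fun x hx => ?_) (fun x hx => ?_)
  · have hx' : |x| < 1 := (abs_le.mpr hx).trans_lt hlt
    exact (phi_hasDerivAt (abs_lt.mp hx').1 (abs_lt.mp hx').2).continuousAt.continuousWithinAt
  · rw [interior_Icc] at hx
    exact phi_deriv_neg (three_mul_sq_lt_one_of_abs_lt (abs_lt.mpr hx))

theorem phi_monotone :
    StrictAntiOn phi (Set.Ioo 0 (1 / Real.sqrt 3)) ∧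
    Tendsto phi (nhdsWithin 0 (Set.Ioi 0)) (nhds 1) := by
  constructor
  · refine phi_strictAntiOn.mono fun x hx => ⟨?_, hx.2.le⟩
    linarith [hx.1, show 0 < 1 / Real.sqrt 3 by positivity]
  · have hcont : ContinuousAt phi 0 := (phi_hasDerivAt (by norm_num) (by norm_num)).continuousAt
    have hphi0 : phi 0 = 1 := by simp [phi]
    exact hphi0 ▸ hcont.tendsto.mono_left nhdsWithin_le_nhds
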